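/- Let c, r, η be positive real numbers with −1/2 < c − r < −η < 1 + η < c, 0 < η ≤ 1/2 and r > 2c − 1, and let J_2 be a positive integer. Then, with σ = c + r·cos θ, ∫_{θ_{−η}}^{π} log ζ(1 − σ) dθ ≤ ((log ζ(1+η) + log ζ(c))/2)·(θ_{1−c} − θ_{−η}) + ((π − θ_{1−c})/(2J_2))·log ζ(c) + κ_3(J_2), where κ_3(J_2) = ((π − θ_{1−c})/(2J_2))·( log ζ(1−c+r) + 2·Σ_{j=1}^{J_2−1} log ζ( 1 − c − r·cos( πj/J_2 + (1 − j/J_2)·θ_{1−c} ) ) ). -/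

import Mathlib

/-!
For real `s > 1`, `log ζ(s) = ∑ₙ Λ(n) / log n · n^{-s}` is a nonnegative combination of convex
decreasing functions of `s`, while `θ ↦ 1 - σ = 1 - (c + r cos θ)` is concave and increasing on
`[π/2, π]`. Hence `θ ↦ log ζ(1 - σ)` is convex on `[θ_{-η}, π]`, where `1 - σ ≥ 1 + η > 1`.
Splitting the integral at `θ_{1-c}`, the trapezoid rule on `[θ_{-η}, θ_{1-c}]` and the composite
trapezoid rule with `J₂` equal steps on `[θ_{1-c}, π]` give the bound: the endpoint values are
`log ζ(1 + η)`, `log ζ(c)`, `log ζ(1 - c + r)`, and the interior nodes are those of `κ₃(J₂)`.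
-/

open Complex

/-- `θ_y`: `0` if `c + r ≤ y`; `arccos((y-c)/r)` if `c - r ≤ y ≤ c + r`; `π` if `y ≤ c - r`. -/
noncomputable def thetaY (c r y : ℝ) : ℝ :=
  if c + r ≤ y then 0
  else if c - r ≤ y then Real.arccos ((y - c) / r)
  else Real.pi

/-- `κ₃(J₂) = ((π - θ_{1-c})/(2J₂))(log ζ(1-c+r)
  + 2 ∑_{j=1}^{J₂-1} log ζ(1 - c - r cos(πj/J₂ + (1 - j/J₂)θ_{1-c})))`. -/
noncomputable def kappa3 (c r : ℝ) (J₂ : ℕ) : ℝ :=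
  (Real.pi - thetaY c r (1 - c)) / (2 * J₂)
    * (Real.log ‖riemannZeta ((1 - c + r : ℝ) : ℂ)‖
      + 2 * ∑ j ∈ Finset.Icc 1 (J₂ - 1),
          Real.log ‖riemannZeta
            ((1 - c - r * Real.cos (Real.pi * j / J₂
              + (1 - (j : ℝ) / J₂) * thetaY c r (1 - c)) : ℝ) : ℂ)‖)

open scoped Real ComplexOrder
open Set MeasureTheory ArithmeticFunction

theorem ConvexOn.tsum {ι E : Type*} [AddCommMonoid E] [Module ℝ E] {s : Set E}
    {f : ι → E → ℝ} (hs : Convex ℝ s) (hf : ∀ i, ConvexOn ℝ s (f i))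
    (hsum : ∀ x ∈ s, Summable fun i => f i x) : ConvexOn ℝ s fun x => ∑' i, f i x := by
  refine ⟨hs, fun x hx y hy a b ha hb hab => ?_⟩
  simp only [smul_eq_mul]
  rw [← (hsum x hx).tsum_mul_left, ← (hsum y hy).tsum_mul_left,
    ← ((hsum x hx).mul_left a).tsum_add ((hsum y hy).mul_left b)]
  exact Summable.tsum_le_tsum (fun i => by simpa using (hf i).2 hx hy ha hb hab)
    (hsum _ (hs hx hy ha hb hab)) (((hsum x hx).mul_left a).add ((hsum y hy).mul_left b))

theorem AntitoneOn.tsum {ι α : Type*} [Preorder α] {s : Set α} {f : ι → α → ℝ}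
    (hf : ∀ i, AntitoneOn (f i) s) (hsum : ∀ x ∈ s, Summable fun i => f i x) :
    AntitoneOn (fun x => ∑' i, f i x) s := fun _ hx _ hy hxy =>
  Summable.tsum_le_tsum (fun i => hf i hx hy hxy) (hsum _ hy) (hsum _ hx)

theorem ConvexOn.comp_concaveOn_of_mapsTo {E : Type*} [AddCommMonoid E] [Module ℝ E]
    {s : Set E} {t : Set ℝ} {f : E → ℝ} {g : ℝ → ℝ} (hg : ConvexOn ℝ t g)
    (hf : ConcaveOn ℝ s f) (hg' : AntitoneOn g t) (hst : MapsTo f s t) :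
    ConvexOn ℝ s (g ∘ f) :=
  ⟨hf.1, fun _ hx _ hy _ _ ha hb hab =>
    (hg' (hg.1 (hst hx) (hst hy) ha hb hab) (hst (hf.1 hx hy ha hb hab))
      (hf.2 hx hy ha hb hab)).trans (hg.2 (hst hx) (hst hy) ha hb hab)⟩

theorem log_norm_riemannZeta_eq_tsum {s : ℝ} (hs : 1 < s) :
    Real.log ‖riemannZeta s‖ = ∑' n : ℕ, Λ n / Real.log n * (n : ℝ)⁻¹ ^ s := by
  rw [← Complex.re_eq_norm.2 (riemannZeta_pos_of_one_lt hs).le, log_riemannZeta_eq hs]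
  refine tsum_congr fun n => ?_
  rw [Real.inv_rpow n.cast_nonneg, div_mul_eq_div_div_swap, div_eq_mul_inv]

theorem summable_vonMangoldt_div_log_mul_inv_rpow {s : ℝ} (hs : 1 < s) :
    Summable fun n : ℕ => Λ n / Real.log n * (n : ℝ)⁻¹ ^ s := by
  refine Summable.of_nonneg_of_le (fun n => by positivity) (fun n => ?_)
    (Real.summable_nat_rpow_inv.2 hs)
  rw [← Real.inv_rpow n.cast_nonneg]
  exact mul_le_of_le_one_left (by positivity)
    (div_le_one_of_le₀ vonMangoldt_le_log (Real.log_natCast_nonneg n))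

theorem convexOn_log_norm_riemannZeta :
    ConvexOn ℝ (Ioi 1) fun s : ℝ => Real.log ‖riemannZeta s‖ := by
  refine (ConvexOn.tsum (convex_Ioi 1) (fun n => ?_)
    fun s hs => summable_vonMangoldt_div_log_mul_inv_rpow hs).congr
    fun s hs => (log_norm_riemannZeta_eq_tsum hs).symm
  rcases n.eq_zero_or_pos with rfl | hn
  · simpa using convexOn_const (0 : ℝ) (convex_Ioi (1 : ℝ))
  · exact ((convexOn_rpow_left (by positivity)).subset (subset_univ _) (convex_Ioi 1)).smul
      (div_nonneg vonMangoldt_nonneg (Real.log_natCast_nonneg n))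

theorem antitoneOn_log_norm_riemannZeta :
    AntitoneOn (fun s : ℝ => Real.log ‖riemannZeta s‖) (Ioi 1) := by
  intro x hx y hy hxy
  beta_reduce
  rw [log_norm_riemannZeta_eq_tsum hx, log_norm_riemannZeta_eq_tsum hy]
  refine AntitoneOn.tsum (fun n a ha b _ hab => ?_)
    (fun s hs => summable_vonMangoldt_div_log_mul_inv_rpow hs) hx hy hxy
  exact mul_le_mul_of_nonneg_left
    (Real.rpow_le_rpow_of_exponent_ge' (by positivity) (Nat.cast_inv_le_one n)
      (zero_le_one.trans (le_of_lt ha)) hab)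
    (div_nonneg vonMangoldt_nonneg (Real.log_natCast_nonneg n))

theorem convexOn_cos_Icc : ConvexOn ℝ (Icc (π / 2) (π + π / 2)) Real.cos := by
  refine (strictConvexOn_of_deriv2_pos (convex_Icc _ _) Real.continuousOn_cos
    fun x hx => ?_).convexOn
  rw [interior_Icc] at hx
  simp [Real.cos_neg_of_pi_div_two_lt_of_lt hx.1 hx.2]

noncomputable def logZetaOneSubSigma (c r θ : ℝ) : ℝ :=
  Real.log ‖riemannZeta ((1 - (c + r * Real.cos θ) : ℝ) : ℂ)‖

section OneSubCos

variable {c r a : ℝ}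

theorem monotoneOn_one_sub_add_mul_cos (hr : 0 ≤ r) :
    MonotoneOn (fun θ => 1 - (c + r * Real.cos θ)) (Icc 0 π) := fun x hx y hy hxy => by
  have := mul_le_mul_of_nonneg_left (Real.antitoneOn_cos hx hy hxy) hr
  dsimp only
  linarith

theorem concaveOn_one_sub_add_mul_cos (hr : 0 ≤ r) :
    ConcaveOn ℝ (Icc (π / 2) π) fun θ => 1 - (c + r * Real.cos θ) := by
  have hsub : Icc (π / 2) π ⊆ Icc (π / 2) (π + π / 2) :=
    Icc_subset_Icc_right (le_add_of_nonneg_right Real.pi_div_two_pos.le)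
  refine ⟨convex_Icc _ _, fun x hx y hy a b ha hb hab => ?_⟩
  have hcos := mul_le_mul_of_nonneg_left (convexOn_cos_Icc.2 (hsub hx) (hsub hy) ha hb hab) hr
  simp only [smul_eq_mul] at hcos ⊢
  linear_combination (1 - c) * hab + hcos

theorem mapsTo_one_sub_add_mul_cos (hr : 0 ≤ r) (ha : 0 ≤ a)
    (h1 : 1 < 1 - (c + r * Real.cos a)) :
    MapsTo (fun θ => 1 - (c + r * Real.cos θ)) (Icc a π) (Ioi 1) := fun _ hθ =>
  h1.trans_le <| monotoneOn_one_sub_add_mul_cos hr ⟨ha, hθ.1.trans hθ.2⟩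
    ⟨ha.trans hθ.1, hθ.2⟩ hθ.1

theorem convexOn_logZetaOneSubSigma (hr : 0 ≤ r) (ha : π / 2 ≤ a)
    (h1 : 1 < 1 - (c + r * Real.cos a)) : ConvexOn ℝ (Icc a π) (logZetaOneSubSigma c r) :=
  convexOn_log_norm_riemannZeta.comp_concaveOn_of_mapsTo
    ((concaveOn_one_sub_add_mul_cos hr).subset (Icc_subset_Icc_left ha) (convex_Icc _ _))
    antitoneOn_log_norm_riemannZeta
    (mapsTo_one_sub_add_mul_cos hr (Real.pi_div_two_pos.le.trans ha) h1)

theorem antitoneOn_logZetaOneSubSigma (hr : 0 ≤ r) (ha : 0 ≤ a)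
    (h1 : 1 < 1 - (c + r * Real.cos a)) : AntitoneOn (logZetaOneSubSigma c r) (Icc a π) :=
  antitoneOn_log_norm_riemannZeta.comp_MonotoneOn
    ((monotoneOn_one_sub_add_mul_cos hr).mono (Icc_subset_Icc_left ha))
    (mapsTo_one_sub_add_mul_cos hr ha h1)

end OneSubCos

theorem ConvexOn.intervalIntegral_le_trapezoid {f : ℝ → ℝ} {a b : ℝ} (hab : a ≤ b)
    (hf : ConvexOn ℝ (Icc a b) f) (hint : IntervalIntegrable f volume a b) :
    ∫ x in a..b, f x ≤ (b - a) / 2 * (f a + f b) := by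
  rcases hab.eq_or_lt with rfl | hlt
  · simp
  have hba : b - a ≠ 0 := (sub_pos.2 hlt).ne'
  set m := (f b - f a) / (b - a)
  have hchord : ∀ x ∈ Icc a b, f x ≤ f a + m * (x - a) := fun x hx => by
    have hcomb : (b - x) / (b - a) * a + (x - a) / (b - a) * b = x := by field_simp; ring
    have h := hf.2 (left_mem_Icc.2 hab) (right_mem_Icc.2 hab)
      (div_nonneg (sub_nonneg.2 hx.2) (sub_pos.2 hlt).le)
      (div_nonneg (sub_nonneg.2 hx.1) (sub_pos.2 hlt).le) (by field_simp; ring)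
    simp only [smul_eq_mul, hcomb] at h
    refine h.trans_eq ?_
    simp only [m]; field_simp; ring
  calc ∫ x in a..b, f x ≤ ∫ x in a..b, (f a + m * (x - a)) :=
        intervalIntegral.integral_mono_on hab hint
          (Continuous.intervalIntegrable (by fun_prop) _ _) hchord
    _ = (b - a) / 2 * (f a + f b) := by
        rw [intervalIntegral.integral_add intervalIntegrable_const
          (Continuous.intervalIntegrable (by fun_prop) _ _), intervalIntegral.integral_const_mul,
          intervalIntegral.integral_comp_sub_right (fun x => x)]
        simp only [intervalIntegral.integral_const, smul_eq_mul, integral_id, m]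
        field_simp; ring

theorem Finset.sum_range_add_apply_succ {R : Type*} [CommSemiring R] (g : ℕ → R) (n : ℕ) :
    ∑ j ∈ range (n + 1), (g j + g (j + 1)) = g 0 + g (n + 1) + 2 * ∑ j ∈ Icc 1 n, g j := by
  rw [sum_add_distrib, sum_range_succ', sum_range_succ, ← Ico_add_one_right_eq_Icc,
    sum_Ico_eq_sum_range]
  simp only [add_tsub_cancel_right, add_comm 1]
  ring

theorem ConvexOn.intervalIntegral_le_composite_trapezoid {f : ℝ → ℝ} {a b : ℝ}
    (hab : a ≤ b) (hf : ConvexOn ℝ (Icc a b) f) (hint : IntervalIntegrable f volume a b) {N : ℕ}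
    (hN : 0 < N) :
    ∫ x in a..b, f x ≤ (b - a) / (2 * N) *
      (f a + f b + 2 * ∑ j ∈ Finset.Icc 1 (N - 1), f (a + j * (b - a) / N)) := by
  obtain ⟨n, rfl⟩ : ∃ n, N = n + 1 := ⟨N - 1, by omega⟩
  set x : ℕ → ℝ := fun j => a + j * (b - a) / (n + 1 : ℕ)
  have hx_step : ∀ j, x (j + 1) - x j = (b - a) / (n + 1 : ℕ) := fun j => by
    simp only [x]; push_cast; ring
  have hx_mono : Monotone x := fun i j hij => by simp only [x]; gcongr
  have hx0 : x 0 = a := by simp [x]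
  have hxN : x (n + 1) = b := by simp only [x]; field_simp; ring
  have hsub : ∀ j < n + 1, Icc (x j) (x (j + 1)) ⊆ Icc a b := fun j hj =>
    Icc_subset_Icc (hx0 ▸ hx_mono (Nat.zero_le j)) (hxN ▸ hx_mono hj)
  have hint_sub : ∀ j < n + 1, IntervalIntegrable f volume (x j) (x (j + 1)) := fun j hj =>
    hint.mono_set (by rw [uIcc_of_le hab, uIcc_of_le (hx_mono j.le_succ)]; exact hsub j hj)
  have hpiece : ∀ j < n + 1, ∫ t in x j..x (j + 1), f t ≤
      (b - a) / (2 * (n + 1 : ℕ)) * (f (x j) + f (x (j + 1))) := fun j hj => by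
    have h := (hf.subset (hsub j hj) (convex_Icc _ _)).intervalIntegral_le_trapezoid
      (hx_mono j.le_succ) (hint_sub j hj)
    rwa [hx_step j, div_div, mul_comm (((n + 1 : ℕ)) : ℝ)] at h
  calc ∫ t in a..b, f t = ∑ j ∈ Finset.range (n + 1), ∫ t in x j..x (j + 1), f t := by
        rw [intervalIntegral.sum_integral_adjacent_intervals hint_sub, hx0, hxN]
    _ ≤ ∑ j ∈ Finset.range (n + 1),
          (b - a) / (2 * (n + 1 : ℕ)) * (f (x j) + f (x (j + 1))) :=
        Finset.sum_le_sum fun j hj => hpiece j (Finset.mem_range.1 hj)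
    _ = _ := by
        rw [← Finset.mul_sum, Finset.sum_range_add_apply_succ (fun j => f (x j)), hx0, hxN,
          Nat.add_sub_cancel]

theorem integral_logZetaOneSubSigma_le {c r a b : ℝ} (hr : 0 ≤ r) (ha : π / 2 ≤ a)
    (hab : a ≤ b) (hb : b ≤ π) (h1 : 1 < 1 - (c + r * Real.cos a)) {N : ℕ} (hN : 0 < N) :
    ∫ θ in a..π, logZetaOneSubSigma c r θ ≤
      (b - a) / 2 * (logZetaOneSubSigma c r a + logZetaOneSubSigma c r b)
      + (π - b) / (2 * N) * (logZetaOneSubSigma c r b + logZetaOneSubSigma c r π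
        + 2 * ∑ j ∈ Finset.Icc 1 (N - 1), logZetaOneSubSigma c r (b + j * (π - b) / N)) := by
  have hconv := convexOn_logZetaOneSubSigma hr ha h1
  have hint : IntervalIntegrable (logZetaOneSubSigma c r) volume a π :=
    AntitoneOn.intervalIntegrable <| by
      rw [uIcc_of_le (hab.trans hb)]
      exact antitoneOn_logZetaOneSubSigma hr (Real.pi_div_two_pos.le.trans ha) h1
  have hb_mem : b ∈ uIcc a π := mem_uIcc_of_le hab hb
  have hint_ab := hint.mono_set (uIcc_subset_uIcc_left hb_mem)
  have hint_bπ := hint.mono_set (uIcc_subset_uIcc_right hb_mem)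
  rw [← intervalIntegral.integral_add_adjacent_intervals hint_ab hint_bπ]
  have hconv_ab := hconv.subset (Icc_subset_Icc_right hb) (convex_Icc _ _)
  have hconv_bπ := hconv.subset (Icc_subset_Icc_left hab) (convex_Icc _ _)
  exact add_le_add (hconv_ab.intervalIntegral_le_trapezoid hab hint_ab)
    (hconv_bπ.intervalIntegral_le_composite_trapezoid hb hint_bπ hN)

section ThetaY

variable {c r : ℝ}

theorem thetaY_eq_arccos (hr : 0 < r) (y : ℝ) : thetaY c r y = Real.arccos ((y - c) / r) := by
  unfold thetaY
  split_ifs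
  · exact (Real.arccos_of_one_le ((one_le_div hr).2 (by linarith))).symm
  · rfl
  · exact (Real.arccos_of_le_neg_one ((div_le_iff₀ hr).2 (by linarith))).symm

theorem thetaY_antitone (hr : 0 < r) : Antitone (thetaY c r) := fun x y hxy => by
  simp only [thetaY_eq_arccos hr]
  exact Real.antitone_arccos (by gcongr)

theorem thetaY_le_pi (hr : 0 < r) (y : ℝ) : thetaY c r y ≤ π :=
  thetaY_eq_arccos hr y ▸ Real.arccos_le_pi _

theorem pi_div_two_le_thetaY (hr : 0 < r) {y : ℝ} (hy : y ≤ c) : π / 2 ≤ thetaY c r y := by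
  rw [thetaY_eq_arccos hr, ← not_lt, Real.arccos_lt_pi_div_two, not_lt]
  exact div_nonpos_of_nonpos_of_nonneg (by linarith) hr.le

theorem add_mul_cos_thetaY (hr : 0 < r) {y : ℝ} (h₁ : c - r ≤ y) (h₂ : y ≤ c + r) :
    c + r * Real.cos (thetaY c r y) = y := by
  rw [thetaY_eq_arccos hr,
    Real.cos_arccos ((le_div_iff₀ hr).2 (by linarith)) ((div_le_one hr).2 (by linarith))]
  field_simp
  ring

end ThetaY

theorem zeta_integral_bound_second_general (c r η : ℝ) (hr : 0 < r) (hη₀ : 0 < η)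
    (h₃ : 1 + η < c)
    (hr' : r > 2 * c - 1)
    (J₂ : ℕ) (hJ₂ : 0 < J₂) :
    (∫ θ in (thetaY c r (-η))..Real.pi,
        Real.log ‖riemannZeta ((1 - (c + r * Real.cos θ) : ℝ) : ℂ)‖)
      ≤ (Real.log ‖riemannZeta ((1 + η : ℝ) : ℂ)‖ + Real.log ‖riemannZeta ((c : ℝ) : ℂ)‖) / 2
          * (thetaY c r (1 - c) - thetaY c r (-η))
        + (Real.pi - thetaY c r (1 - c)) / (2 * J₂) * Real.log ‖riemannZeta ((c : ℝ) : ℂ)‖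
        + kappa3 c r J₂ := by
  set a := thetaY c r (-η)
  set b := thetaY c r (1 - c)
  have hσa : c + r * Real.cos a = -η := add_mul_cos_thetaY hr (by linarith) (by linarith)
  have hσb : c + r * Real.cos b = 1 - c := add_mul_cos_thetaY hr (by linarith) (by linarith)
  have hσπ : 1 - (c + r * Real.cos π) = 1 - c + r := by rw [Real.cos_pi]; ring
  have hnode : ∀ j : ℕ, 1 - (c + r * Real.cos (b + j * (π - b) / J₂)) =
      1 - c - r * Real.cos (π * j / J₂ + (1 - (j : ℝ) / J₂) * b) := fun j => by
    have hJ : (J₂ : ℝ) ≠ 0 := by positivity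
    rw [show b + j * (π - b) / J₂ = π * j / J₂ + (1 - (j : ℝ) / J₂) * b by field_simp; ring]
    ring
  have key := integral_logZetaOneSubSigma_le (c := c) (a := a) (b := b) hr.le
    (pi_div_two_le_thetaY hr (by linarith)) (thetaY_antitone hr (by linarith))
    (thetaY_le_pi hr _) (by linarith) hJ₂
  simp only [logZetaOneSubSigma, hσa, hσb, hσπ, hnode, sub_neg_eq_add, sub_sub_cancel] at key
  rw [kappa3]
  linear_combination key

/-- **Lemma 3.14, second bound.** Assuming further `r > 2c - 1`, for `σ = c + r cos θ`,
`∫_{θ_{-η}}^{π} log ζ(1-σ) dθ ≤ ((log ζ(1+η) + log ζ(c))/2)(θ_{1-c} - θ_{-η})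
  + ((π - θ_{1-c})/(2J₂)) log ζ(c) + κ₃(J₂)`. -/
theorem zeta_integral_bound_second (c r η : ℝ) (hc : 0 < c) (hr : 0 < r) (hη₀ : 0 < η)
    (h₁ : -(1 / 2) < c - r) (h₂ : c - r < -η) (h₃ : 1 + η < c) (hη₁ : η ≤ 1 / 2)
    (hr' : r > 2 * c - 1)
    (J₂ : ℕ) (hJ₂ : 0 < J₂) :
    (∫ θ in (thetaY c r (-η))..Real.pi,
        Real.log ‖riemannZeta ((1 - (c + r * Real.cos θ) : ℝ) : ℂ)‖)
      ≤ (Real.log ‖riemannZeta ((1 + η : ℝ) : ℂ)‖ + Real.log ‖riemannZeta ((c : ℝ) : ℂ)‖) / 2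
          * (thetaY c r (1 - c) - thetaY c r (-η))
        + (Real.pi - thetaY c r (1 - c)) / (2 * J₂) * Real.log ‖riemannZeta ((c : ℝ) : ℂ)‖
        + kappa3 c r J₂ :=
  zeta_integral_bound_second_general c r η hr hη₀ h₃ hr' J₂ hJ₂
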